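/- arXiv:2003.01269 — 2 statements merged into one kernel-verified Lean document; each statement's English description precedes it below -/
import Mathlib

section
/- Let M, N ≥ 1 and let U := {(λ, ρ) ∈ ℝ^M × ℝ^N : λᵢ > 1 for all i and 0 < ρⱼ < 1 for all j}. Define Φ : U → Matrix(M, N; ℝ) by Φ(λ, ρ)_{ij} = (ln λᵢ)/(ln ρⱼ). Then at every point of U the map Φ is differentiable and its derivative, as a linear map ℝ^M × ℝ^N → Matrix(M, N; ℝ), has rank exactly M + N − 1. -/
/-! The ratio map `(x, y) ↦ (xᵢ / yⱼ)` is homogeneous of degree `0`, so its differential at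
`(x, y)` kills `(x, y)`; conversely `(u, v)` is killed iff `uᵢ yⱼ = xᵢ vⱼ` for all `i, j`, which
forces `(u, v) ∥ (x, y)` once `x ≠ 0` and no `yⱼ` vanishes. Hence the differential has rank
`M + N - 1`. The ratio invariants are this ratio map composed with the coordinatewise logarithm,
whose differential `diag(1/λ, 1/ρ)` is invertible and so does not change the rank. -/

attribute [local instance] Matrix.normedAddCommGroup Matrix.normedSpace

section Ratio

variable {ι κ : Type*}

noncomputable def ratioMatrix (p : (ι → ℝ) × (κ → ℝ)) : Matrix ι κ ℝ := fun i j => p.1 i / p.2 j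

noncomputable def ratioFDeriv (p : (ι → ℝ) × (κ → ℝ)) : (ι → ℝ) × (κ → ℝ) →L[ℝ] Matrix ι κ ℝ :=
  ContinuousLinearMap.pi fun i => ContinuousLinearMap.pi fun j =>
    (p.2 j)⁻¹ • (ContinuousLinearMap.proj i ∘L ContinuousLinearMap.fst ℝ _ _) -
      (p.1 i / p.2 j ^ 2) • (ContinuousLinearMap.proj j ∘L ContinuousLinearMap.snd ℝ _ _)

theorem ratioFDeriv_apply (p v : (ι → ℝ) × (κ → ℝ)) (i : ι) (j : κ) :
    ratioFDeriv p v i j = v.1 i / p.2 j - p.1 i / p.2 j ^ 2 * v.2 j := by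
  rw [div_eq_inv_mul]
  rfl

theorem hasFDerivAt_ratioMatrix [Fintype ι] [Fintype κ] {p : (ι → ℝ) × (κ → ℝ)}
    (hp : ∀ j, p.2 j ≠ 0) :
    HasFDerivAt ratioMatrix (ratioFDeriv p) p := by
  refine hasFDerivAt_pi'' fun i => hasFDerivAt_pi'' fun j => ?_
  have hnum : HasFDerivAt (fun q : (ι → ℝ) × (κ → ℝ) => q.1 i)
      (ContinuousLinearMap.proj i ∘L ContinuousLinearMap.fst ℝ _ _) p :=
    (ContinuousLinearMap.proj i ∘L ContinuousLinearMap.fst ℝ (ι → ℝ) (κ → ℝ)).hasFDerivAt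
  have hden : HasFDerivAt (fun q : (ι → ℝ) × (κ → ℝ) => q.2 j)
      (ContinuousLinearMap.proj j ∘L ContinuousLinearMap.snd ℝ _ _) p :=
    (ContinuousLinearMap.proj j ∘L ContinuousLinearMap.snd ℝ (ι → ℝ) (κ → ℝ)).hasFDerivAt
  refine (hnum.mul ((hasDerivAt_inv (hp j)).comp_hasFDerivAt p hden)).congr_fderiv ?_
  refine ContinuousLinearMap.ext fun v => ?_
  change p.1 i * (-(p.2 j ^ 2)⁻¹ * v.2 j) + (p.2 j)⁻¹ * v.1 i = ratioFDeriv p v i j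
  rw [ratioFDeriv_apply]
  ring

theorem ratioFDeriv_apply_eq_zero_iff {p : (ι → ℝ) × (κ → ℝ)} (hp : ∀ j, p.2 j ≠ 0)
    (v : (ι → ℝ) × (κ → ℝ)) (i : ι) (j : κ) :
    ratioFDeriv p v i j = 0 ↔ v.1 i * p.2 j = p.1 i * v.2 j := by
  rw [ratioFDeriv_apply, sub_eq_zero]
  field_simp [hp j]

theorem ker_ratioFDeriv [Nonempty κ] {p : (ι → ℝ) × (κ → ℝ)} (h₁ : p.1 ≠ 0)
    (h₂ : ∀ j, p.2 j ≠ 0) :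
    LinearMap.ker (ratioFDeriv p : (ι → ℝ) × (κ → ℝ) →ₗ[ℝ] Matrix ι κ ℝ) = ℝ ∙ p := by
  refine le_antisymm (fun v hv => ?_) ?_
  · have hv₀ := LinearMap.mem_ker.1 hv
    have hv' : ∀ i j, v.1 i * p.2 j = p.1 i * v.2 j := fun i j =>
      (ratioFDeriv_apply_eq_zero_iff h₂ v i j).1 (congrFun₂ hv₀ i j)
    obtain ⟨i₀, hi₀⟩ := Function.ne_iff.1 h₁
    obtain ⟨j₀⟩ := ‹Nonempty κ›
    set c := v.1 i₀ / p.1 i₀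
    have hv₂ : ∀ j, v.2 j = c * p.2 j := fun j => by
      rw [div_mul_eq_mul_div, eq_div_iff hi₀, hv' i₀ j, mul_comm]
    have hv₁ : ∀ i, v.1 i = c * p.1 i := fun i =>
      mul_right_cancel₀ (h₂ j₀) (by rw [hv' i j₀, hv₂ j₀]; ring)
    exact Submodule.mem_span_singleton.2
      ⟨c, Prod.ext (funext fun i => (hv₁ i).symm) (funext fun j => (hv₂ j).symm)⟩
  · rw [Submodule.span_singleton_le_iff_mem, LinearMap.mem_ker]
    ext i j
    exact (ratioFDeriv_apply_eq_zero_iff h₂ p i j).2 rfl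

theorem finrank_range_ratioFDeriv [Fintype ι] [Fintype κ] [Nonempty κ]
    {p : (ι → ℝ) × (κ → ℝ)} (h₁ : p.1 ≠ 0) (h₂ : ∀ j, p.2 j ≠ 0) :
    Module.finrank ℝ (LinearMap.range (ratioFDeriv p : (ι → ℝ) × (κ → ℝ) →ₗ[ℝ] Matrix ι κ ℝ)) =
      Fintype.card ι + Fintype.card κ - 1 := by
  have h := LinearMap.finrank_range_add_finrank_ker
    (ratioFDeriv p : (ι → ℝ) × (κ → ℝ) →ₗ[ℝ] Matrix ι κ ℝ)
  rw [ker_ratioFDeriv h₁ h₂, finrank_span_singleton (fun h => h₁ (congrArg Prod.fst h)),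
    Module.finrank_prod, Module.finrank_fintype_fun_eq_card,
    Module.finrank_fintype_fun_eq_card] at h
  omega

theorem hasFDerivAt_pi_log [Fintype ι] {x : ι → ℝ} (hx : ∀ i, x i ≠ 0) :
    HasFDerivAt (fun y i => Real.log (y i))
      (ContinuousLinearMap.pi fun i =>
        (x i)⁻¹ • ContinuousLinearMap.proj (R := ℝ) (φ := fun _ : ι => ℝ) i) x :=
  hasFDerivAt_pi'' fun i => (hasFDerivAt_apply (F' := fun _ => ℝ) i x).log (hx i)

theorem surjective_pi_smul_proj {c : ι → ℝ} (hc : ∀ i, c i ≠ 0) :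
    Function.Surjective
      (ContinuousLinearMap.pi fun i => c i • ContinuousLinearMap.proj i : (ι → ℝ) →L[ℝ] ι → ℝ) :=
  fun y => ⟨fun i => y i / c i, funext fun i => mul_div_cancel₀ (y i) (hc i)⟩

end Ratio

/-- The combined map of ratio invariants `Φ(λ, ρ)ᵢⱼ = ln λᵢ / ln ρⱼ`, defined on the
open set where all `λᵢ > 1` and all `0 < ρⱼ < 1`, is differentiable and its
differential has rank exactly `M + N − 1` at every point. -/
theorem ratio_invariants_rank (M N : ℕ) (hM : 1 ≤ M) (hN : 1 ≤ N)
    (U : Set ((Fin M → ℝ) × (Fin N → ℝ)))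
    (hU : U = {p | (∀ i, 1 < p.1 i) ∧ (∀ j, 0 < p.2 j ∧ p.2 j < 1)})
    (Φ : (Fin M → ℝ) × (Fin N → ℝ) → Matrix (Fin M) (Fin N) ℝ)
    (hΦ : ∀ p i j, Φ p i j = Real.log (p.1 i) / Real.log (p.2 j)) :
    ∀ p ∈ U, ∃ Φ' : ((Fin M → ℝ) × (Fin N → ℝ)) →L[ℝ] Matrix (Fin M) (Fin N) ℝ,
      HasFDerivAt Φ Φ' p ∧
      Module.finrank ℝ (LinearMap.range (Φ' : ((Fin M → ℝ) × (Fin N → ℝ)) →ₗ[ℝ]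
        Matrix (Fin M) (Fin N) ℝ)) = M + N - 1 := by
  subst hU
  rintro p ⟨hl, hr⟩
  have : Nonempty (Fin N) := ⟨⟨0, hN⟩⟩
  have hl₀ : ∀ i, p.1 i ≠ 0 := fun i => (zero_lt_one.trans (hl i)).ne'
  have hr₀ : ∀ j, p.2 j ≠ 0 := fun j => (hr j).1.ne'
  set logs := Prod.map (fun x : Fin M → ℝ => fun i => Real.log (x i))
    (fun y : Fin N → ℝ => fun j => Real.log (y j))
  have hΦ_eq : Φ = ratioMatrix ∘ logs := funext fun q => funext fun i => funext fun j => hΦ q i j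
  have hlog_num : (logs p).1 ≠ 0 :=
    Function.ne_iff.2 ⟨⟨0, hM⟩, (Real.log_pos (hl _)).ne'⟩
  have hlog_den : ∀ j, (logs p).2 j ≠ 0 := fun j => (Real.log_neg (hr j).1 (hr j).2).ne
  refine ⟨ratioFDeriv (logs p) ∘L _, hΦ_eq ▸ (hasFDerivAt_ratioMatrix hlog_den).comp p
    ((hasFDerivAt_pi_log hl₀).prodMap p (hasFDerivAt_pi_log hr₀)), ?_⟩
  have hsurj := (surjective_pi_smul_proj fun i => inv_ne_zero (hl₀ i)).prodMap
    (surjective_pi_smul_proj fun j => inv_ne_zero (hr₀ j))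
  rw [ContinuousLinearMap.toLinearMap_comp, LinearMap.range_comp_of_range_eq_top _
    (LinearMap.range_eq_top.2 hsurj), finrank_range_ratioFDeriv hlog_num hlog_den,
    Fintype.card_fin, Fintype.card_fin]
end

section
/- Let (aₙ) and (bₙ) be strictly decreasing sequences of positive real numbers converging to 0, and let h : ℝ → ℝ be strictly increasing with h(0) = 0. Assume that for every n there exists m with h(aₙ) = bₘ, and that there exists M₀ ∈ ℕ such that for every m ≥ M₀ there exists n with h(aₙ) = bₘ. Then there exist k ∈ ℤ and N ∈ ℕ such that for every n ≥ N one has n + k ≥ 0 and h(aₙ) = b_{n+k}. -/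
open Filter Set

/-! The forward hypothesis gives an index map `f : ℕ → ℕ` with `h (a n) = b (f n)`. Since
`b ∘ f = h ∘ a` is strictly decreasing and `b` is, `f` is strictly increasing, and the backward
hypothesis says that `f` hits every index `≥ M₀`. A strictly increasing map of `ℕ` cannot skip a
value that lies in its range, so `f (n + 1) = f n + 1` for `n ≥ M₀`, i.e. `f` is eventually a
shift `n ↦ n + k`. -/

lemma StrictMono.of_strictAnti_comp {α β γ : Type*} [Preorder α] [LinearOrder β] [Preorder γ]
    {g : β → γ} {f : α → β} (hg : StrictAnti g) (hgf : StrictAnti (g ∘ f)) : StrictMono f :=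
  fun _ _ hxy => hg.lt_iff_gt.mp (hgf hxy)

lemma StrictMono.apply_succ_eq_of_mem_range {f : ℕ → ℕ} (hf : StrictMono f) {n : ℕ}
    (hn : f n + 1 ∈ range f) : f (n + 1) = f n + 1 := by
  obtain ⟨p, hp⟩ := hn
  have hnp : n + 1 ≤ p := hf.lt_iff_lt.mp (by omega)
  have := hf.monotone hnp
  have := hf (Nat.lt_add_one n)
  omega

lemma StrictMono.exists_eq_add_of_Ici_subset_range {f : ℕ → ℕ} (hf : StrictMono f) {M : ℕ}
    (hM : Ici M ⊆ range f) : ∃ k : ℤ, ∀ n ≥ M, (f n : ℤ) = n + k := by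
  refine ⟨f M - M, fun n hn => ?_⟩
  induction n, hn using Nat.le_induction with
  | base => ring
  | succ n hn ih =>
    have hfn : M ≤ f n + 1 := by have := hf.le_apply (x := n); omega
    rw [hf.apply_succ_eq_of_mem_range (hM hfn)]
    push_cast
    linarith

theorem monotone_map_shifts_sequences_general (a b : ℕ → ℝ) (h : ℝ → ℝ)
    (ha_anti : StrictAnti a) (hb_anti : StrictAnti b)
    (hh_mono : StrictMono h)
    (h_fwd : ∀ n, ∃ m, h (a n) = b m)
    (h_bwd : ∃ M₀ : ℕ, ∀ m ≥ M₀, ∃ n, h (a n) = b m) :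
    ∃ (k : ℤ) (N : ℕ), ∀ n ≥ N, 0 ≤ (n : ℤ) + k ∧ h (a n) = b ((n : ℤ) + k).toNat := by
  obtain ⟨M₀, hM₀⟩ := h_bwd
  choose f hf using h_fwd
  have hbf : b ∘ f = h ∘ a := funext fun n => (hf n).symm
  have hf_mono : StrictMono f :=
    .of_strictAnti_comp hb_anti (hbf ▸ hh_mono.comp_strictAnti ha_anti)
  have hf_range : Ici M₀ ⊆ range f := fun m hm =>
    (hM₀ m hm).imp fun n hn => hb_anti.injective ((hf n).symm.trans hn)
  obtain ⟨k, hk⟩ := hf_mono.exists_eq_add_of_Ici_subset_range hf_range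
  refine ⟨k, M₀, fun n hn => ?_⟩
  rw [← hk n hn]
  exact ⟨Int.natCast_nonneg _, by simpa using hf n⟩

/-- Combinatorial heart of Theorem 3.2: a strictly increasing map fixing `0` that maps
one strictly decreasing null sequence into another (and hits every term of the second
sequence with large enough index) must eventually shift indices by a constant `k ∈ ℤ`. -/
theorem monotone_map_shifts_sequences (a b : ℕ → ℝ) (h : ℝ → ℝ)
    (ha_anti : StrictAnti a) (hb_anti : StrictAnti b)
    (ha_pos : ∀ n, 0 < a n) (hb_pos : ∀ n, 0 < b n)
    (ha_lim : Tendsto a atTop (nhds 0)) (hb_lim : Tendsto b atTop (nhds 0))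
    (hh_mono : StrictMono h) (hh0 : h 0 = 0)
    (h_fwd : ∀ n, ∃ m, h (a n) = b m)
    (h_bwd : ∃ M₀ : ℕ, ∀ m ≥ M₀, ∃ n, h (a n) = b m) :
    ∃ (k : ℤ) (N : ℕ), ∀ n ≥ N, 0 ≤ (n : ℤ) + k ∧ h (a n) = b ((n : ℤ) + k).toNat :=
  monotone_map_shifts_sequences_general a b h ha_anti hb_anti hh_mono h_fwd h_bwd
end
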